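/- Let λ_x, ν_x be the rates of a birth–death generator on E = ℕ or E = {0,1,…,n} (positive except ν_0 = 0 and λ_n = 0 when E is finite), and let ρ ≥ 0 satisfy min{λ_{x−1} − λ_x, ν_{x+1} − ν_x} ≥ ρ for all interior x ∈ E∖{0, sup E}. Then for every function f on E and every x ∈ E, the pointwise curvature inequality Γ₂f(x) − Γ((Γf)^{1/2})(x) ≥ ρ Γf(x) holds. -/

import Mathlib

/-- The birth–death generator
`L f (x) = lam x (f(x+1) - f(x)) + nu x (f(x-1) - f(x))` associated with the
rates `lam`, `nu` (with `nu 0 = 0`, so the value `f (0 - 1) = f 0` is irrelevant). -/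
noncomputable def genBD (lam nu : ℕ → ℝ) (f : ℕ → ℝ) (x : ℕ) : ℝ :=
  lam x * (f (x + 1) - f x) + nu x * (f (x - 1) - f x)

/-- The bilinear "carré du champ" operator `Γ(f,g)` of the birth–death generator. -/
noncomputable def gammaBilBD (lam nu : ℕ → ℝ) (f g : ℕ → ℝ) (x : ℕ) : ℝ :=
  (1 / 2) * (lam x * (f (x + 1) - f x) * (g (x + 1) - g x) +
    nu x * (f (x - 1) - f x) * (g (x - 1) - g x))

/-- The "carré du champ" operator `Γ f = Γ(f,f)`. -/
noncomputable def gammaBD (lam nu : ℕ → ℝ) (f : ℕ → ℝ) (x : ℕ) : ℝ :=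
  gammaBilBD lam nu f f x

/-- The iterated operator `Γ₂ f (x) = (1/2)(L Γf (x) - 2 Γ(f, Lf)(x))`. -/
noncomputable def gamma2BD (lam nu : ℕ → ℝ) (f : ℕ → ℝ) (x : ℕ) : ℝ :=
  (1 / 2) * (genBD lam nu (gammaBD lam nu f) x -
    2 * gammaBilBD lam nu f (genBD lam nu f) x)

/-!
On `E = ℕ` the hypothesis on the rates forces `ρ ≤ 0`, since `λ` stays positive while dropping
by `ρ` at every step; what remains is `Γ(√Γf) ≤ Γ₂f` for `λ` nonincreasing and `ν` nondecreasing.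
Writing `Γ(g) = ½ L(g²) − g L g` for `g = √Γf` turns this into the pointwise inequality
`Γ(f, Lf)(x) ≤ √Γf(x) · L(√Γf)(x)`, whose two sides are explicit in the values at `x - 2, …, x + 2`.
Two Cauchy–Schwarz bounds for `√Γf(x) √Γf(x ± 1)`, valid because of the monotonicity of the
rates, leave a sum of nonnegative terms.
-/

theorem sq_mul_abs_add_mul_abs_le {p q r s : ℝ} (hq : 0 ≤ q) (hr : 0 ≤ r) (hrp : r ≤ p)
    (hqs : q ≤ s) (a b c d : ℝ) :
    (r * |a * c| + q * |b * d|) ^ 2 ≤ (p * a ^ 2 + q * b ^ 2) * (r * c ^ 2 + s * d ^ 2) := by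
  have hac : |a * c| ^ 2 = a ^ 2 * c ^ 2 := by rw [sq_abs, mul_pow]
  have hbd : |b * d| ^ 2 = b ^ 2 * d ^ 2 := by rw [sq_abs, mul_pow]
  have hcross : 2 * (|a * c| * |b * d|) ≤ a ^ 2 * d ^ 2 + b ^ 2 * c ^ 2 :=
    calc 2 * (|a * c| * |b * d|) = 2 * |a * d| * |b * c| := by simp only [abs_mul]; ring
      _ ≤ |a * d| ^ 2 + |b * c| ^ 2 := two_mul_le_add_sq _ _
      _ = a ^ 2 * d ^ 2 + b ^ 2 * c ^ 2 := by simp only [sq_abs, mul_pow]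
  have hps : 0 ≤ p * s - r * q := sub_nonneg.2 (mul_le_mul hrp hqs hq (hr.trans hrp))
  linear_combination (r * q) * hcross + r ^ 2 * hac + q ^ 2 * hbd
    + mul_nonneg (mul_nonneg (sub_nonneg.2 hrp) hr) (mul_nonneg (sq_nonneg a) (sq_nonneg c))
    + mul_nonneg (mul_nonneg (sub_nonneg.2 hqs) hq) (mul_nonneg (sq_nonneg b) (sq_nonneg d))
    + mul_nonneg hps (mul_nonneg (sq_nonneg a) (sq_nonneg d))

theorem mul_abs_add_mul_abs_le_two_mul_sqrt_mul_sqrt {p q r s : ℝ} (hq : 0 ≤ q) (hr : 0 ≤ r)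
    (hrp : r ≤ p) (hqs : q ≤ s) (a b c d : ℝ) :
    r * |a * c| + q * |b * d| ≤
      2 * (√((p * a ^ 2 + q * b ^ 2) / 2) * √((r * c ^ 2 + s * d ^ 2) / 2)) := by
  have hp : 0 ≤ p := hr.trans hrp
  have hs : 0 ≤ s := hq.trans hqs
  rw [← Real.sqrt_mul (by positivity), show (2 : ℝ) = √(2 ^ 2) by simp,
    ← Real.sqrt_mul (by positivity)]
  apply Real.le_sqrt_of_sq_le
  convert sq_mul_abs_add_mul_abs_le hq hr hrp hqs a b c d using 1
  ring

theorem nonpos_of_le_sub_succ {u : ℕ → ℝ} {ρ : ℝ} (hu : ∀ n, 0 ≤ u n)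
    (h : ∀ n, ρ ≤ u n - u (n + 1)) : ρ ≤ 0 := by
  have hdrop : ∀ n : ℕ, u n + n * ρ ≤ u 0 := by
    intro n
    induction n with
    | zero => simp
    | succ n ih => push_cast; linarith [h n]
  by_contra! hρ
  obtain ⟨n, hn⟩ := exists_nat_gt (u 0 / ρ)
  rw [div_lt_iff₀ hρ] at hn
  linarith [hdrop n, hu n]

section BirthDeath

variable {lam nu : ℕ → ℝ}

theorem gammaBD_eq (f : ℕ → ℝ) (x : ℕ) :
    gammaBD lam nu f x = (lam x * (f (x + 1) - f x) ^ 2 + nu x * (f (x - 1) - f x) ^ 2) / 2 := by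
  unfold gammaBD gammaBilBD; ring

theorem gammaBD_nonneg {x : ℕ} (hlam : 0 ≤ lam x) (hnu : 0 ≤ nu x) (f : ℕ → ℝ) :
    0 ≤ gammaBD lam nu f x := by
  rw [gammaBD_eq]; positivity

theorem gammaBD_eq_half_genBD_sq_sub (g : ℕ → ℝ) (x : ℕ) :
    gammaBD lam nu g x = genBD lam nu (fun z => g z ^ 2) x / 2 - g x * genBD lam nu g x := by
  unfold gammaBD gammaBilBD genBD; ring

theorem gamma2BD_sub_gammaBD_sqrt {f : ℕ → ℝ} (hΓ : ∀ z, 0 ≤ gammaBD lam nu f z) (x : ℕ) :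
    gamma2BD lam nu f x - gammaBD lam nu (fun z => √(gammaBD lam nu f z)) x =
      √(gammaBD lam nu f x) * genBD lam nu (fun z => √(gammaBD lam nu f z)) x
        - gammaBilBD lam nu f (genBD lam nu f) x := by
  have hsq : (fun z => √(gammaBD lam nu f z) ^ 2) = gammaBD lam nu f :=
    funext fun z => Real.sq_sqrt (hΓ z)
  rw [gammaBD_eq_half_genBD_sq_sub, hsq, gamma2BD]
  ring

/-- At `x = 0` the truncation `0 - 1 = 0` makes `f (x - 1) - f x` vanish, so the formula is
uniform in `x`. -/
theorem two_mul_gammaBilBD_genBD (f : ℕ → ℝ) (x : ℕ) :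
    2 * gammaBilBD lam nu f (genBD lam nu f) x =
      lam x * (f (x + 1) - f x) * (lam (x + 1) * (f (x + 2) - f (x + 1))
          - nu (x + 1) * (f (x + 1) - f x) - genBD lam nu f x)
        + nu x * (f (x - 1) - f x) * (nu (x - 1) * (f (x - 1 - 1) - f (x - 1))
          - lam (x - 1) * (f (x - 1) - f x) - genBD lam nu f x) := by
  cases x with
  | zero => simp only [gammaBilBD, genBD, Nat.zero_sub, Nat.zero_add, sub_self]; ring
  | succ k => simp only [gammaBilBD, genBD, Nat.add_sub_cancel]; ring

theorem abs_mul_add_le_two_mul_sqrt_gammaBD_mul_sqrt_gammaBD_succ {x : ℕ}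
    (hlam : 0 ≤ lam (x + 1)) (hnu : 0 ≤ nu x) (hlam_le : lam (x + 1) ≤ lam x)
    (hnu_le : nu x ≤ nu (x + 1)) (f : ℕ → ℝ) :
    lam (x + 1) * |(f (x + 1) - f x) * (f (x + 2) - f (x + 1))|
        + nu x * |(f (x + 1) - f x) * (f (x - 1) - f x)| ≤
      2 * (√(gammaBD lam nu f x) * √(gammaBD lam nu f (x + 1))) := by
  have h := mul_abs_add_mul_abs_le_two_mul_sqrt_mul_sqrt hnu hlam hlam_le hnu_le
    (f (x + 1) - f x) (f (x - 1) - f x) (f (x + 2) - f (x + 1)) (f x - f (x + 1))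
  rw [gammaBD_eq, gammaBD_eq, Nat.add_sub_cancel]
  convert h using 3
  rw [show f x - f (x + 1) = -(f (x + 1) - f x) by ring, mul_neg, abs_neg, mul_comm]

theorem abs_mul_add_le_two_mul_sqrt_gammaBD_mul_sqrt_gammaBD_pred {x : ℕ}
    (hnu : 0 ≤ nu (x - 1)) (hlam : 0 ≤ lam x) (hnu_le : nu (x - 1) ≤ nu x)
    (hlam_le : lam x ≤ lam (x - 1)) (f : ℕ → ℝ) :
    nu (x - 1) * |(f (x - 1) - f x) * (f (x - 1 - 1) - f (x - 1))|
        + lam x * |(f (x + 1) - f x) * (f (x - 1) - f x)| ≤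
      2 * (√(gammaBD lam nu f x) * √(gammaBD lam nu f (x - 1))) := by
  cases x with
  | zero => simp only [Nat.zero_sub, sub_self, mul_zero, abs_zero, add_zero]; positivity
  | succ k =>
    simp only [Nat.add_sub_cancel] at hnu hnu_le hlam_le ⊢
    have h := mul_abs_add_mul_abs_le_two_mul_sqrt_mul_sqrt hlam hnu hnu_le hlam_le
      (f k - f (k + 1)) (f (k + 1 + 1) - f (k + 1)) (f (k - 1) - f k) (f (k + 1) - f k)
    rw [gammaBD_eq, gammaBD_eq, add_comm (lam (k + 1) * _), add_comm (lam k * _),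
      Nat.add_sub_cancel]
    convert h using 3
    rw [show f (k + 1) - f k = -(f k - f (k + 1)) by ring, mul_neg, abs_neg]

theorem gammaBilBD_genBD_le_sqrt_mul_genBD_sqrt (hlam : ∀ x, 0 ≤ lam x) (hnu : ∀ x, 0 ≤ nu x)
    (hlam_anti : Antitone lam) (hnu_mono : Monotone nu) (f : ℕ → ℝ) (x : ℕ) :
    gammaBilBD lam nu f (genBD lam nu f) x ≤
      √(gammaBD lam nu f x) * genBD lam nu (fun z => √(gammaBD lam nu f z)) x := by
  have hsq : √(gammaBD lam nu f x) * √(gammaBD lam nu f x) = gammaBD lam nu f x :=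
    Real.mul_self_sqrt (gammaBD_nonneg (hlam x) (hnu x) f)
  have hsucc := abs_mul_add_le_two_mul_sqrt_gammaBD_mul_sqrt_gammaBD_succ (hlam (x + 1)) (hnu x)
    (hlam_anti x.le_succ) (hnu_mono x.le_succ) f
  have hpred := abs_mul_add_le_two_mul_sqrt_gammaBD_mul_sqrt_gammaBD_pred (hnu (x - 1)) (hlam x)
    (hnu_mono (x.sub_le 1)) (hlam_anti (x.sub_le 1)) f
  have hΓ := gammaBD_eq (lam := lam) (nu := nu) f x
  have hΓbil := two_mul_gammaBilBD_genBD (lam := lam) (nu := nu) f x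
  simp only [genBD] at hΓbil ⊢
  set a := f (x + 1) - f x
  set b := f (x - 1) - f x
  set c := f (x + 2) - f (x + 1)
  set d := f (x - 1 - 1) - f (x - 1)
  have h1 : 0 ≤ lam x * lam (x + 1) * (|a * c| - a * c) :=
    mul_nonneg (mul_nonneg (hlam x) (hlam (x + 1))) (sub_nonneg.2 (le_abs_self _))
  have h2 : 0 ≤ nu x * nu (x - 1) * (|b * d| - b * d) :=
    mul_nonneg (mul_nonneg (hnu x) (hnu (x - 1))) (sub_nonneg.2 (le_abs_self _))
  have h3 : 0 ≤ lam x * nu x * (|a * b| + a * b) :=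
    mul_nonneg (mul_nonneg (hlam x) (hnu x)) (neg_le_iff_add_nonneg.1 (neg_le_abs _))
  have h4 : 0 ≤ lam x * (nu (x + 1) - nu x) * a ^ 2 :=
    mul_nonneg (mul_nonneg (hlam x) (sub_nonneg.2 (hnu_mono x.le_succ))) (sq_nonneg a)
  have h5 : 0 ≤ nu x * (lam (x - 1) - lam x) * b ^ 2 :=
    mul_nonneg (mul_nonneg (hnu x) (sub_nonneg.2 (hlam_anti (x.sub_le 1)))) (sq_nonneg b)
  linear_combination (1 / 2) * (mul_le_mul_of_nonneg_left hsucc (hlam x)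
    + mul_le_mul_of_nonneg_left hpred (hnu x) + h1 + h2 + h4 + h5) + h3
    + (lam x + nu x) * (hΓ + hsq) + (1 / 2) * hΓbil

theorem gammaBD_sqrt_gammaBD_le_gamma2BD (hlam : ∀ x, 0 ≤ lam x) (hnu : ∀ x, 0 ≤ nu x)
    (hlam_anti : Antitone lam) (hnu_mono : Monotone nu) (f : ℕ → ℝ) (x : ℕ) :
    gammaBD lam nu (fun z => √(gammaBD lam nu f z)) x ≤ gamma2BD lam nu f x := by
  have hΓ : ∀ z, 0 ≤ gammaBD lam nu f z := fun z => gammaBD_nonneg (hlam z) (hnu z) f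
  have := gammaBilBD_genBD_le_sqrt_mul_genBD_sqrt hlam hnu hlam_anti hnu_mono f x
  linarith [gamma2BD_sub_gammaBD_sqrt hΓ x]

end BirthDeath

theorem birthDeath_pointwise_gamma2_inequality
    (lam nu : ℕ → ℝ) (hlam_pos : ∀ x, 0 < lam x)
    (hnu_zero : nu 0 = 0) (hnu_pos : ∀ x, 0 < nu (x + 1))
    (ρ : ℝ) (hρ : 0 ≤ ρ)
    (hrates : ∀ x : ℕ, ρ ≤ min (lam x - lam (x + 1)) (nu (x + 2) - nu (x + 1))) :
    ∀ (f : ℕ → ℝ) (x : ℕ),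
      ρ * gammaBD lam nu f x ≤
        gamma2BD lam nu f x -
          gammaBD lam nu (fun z => Real.sqrt (gammaBD lam nu f z)) x := by
  intro f x
  have hlam_drop : ∀ n, ρ ≤ lam n - lam (n + 1) := fun n => (hrates n).trans (min_le_left _ _)
  have hlam : ∀ n, 0 ≤ lam n := fun n => (hlam_pos n).le
  have hnu : ∀ n, 0 ≤ nu n
    | 0 => hnu_zero.ge
    | n + 1 => (hnu_pos n).le
  have hlam_anti : Antitone lam :=
    antitone_nat_of_succ_le fun n => by linarith [hlam_drop n]
  have hnu_mono : Monotone nu := monotone_nat_of_le_succ fun n => by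
    cases n with
    | zero => exact hnu_zero ▸ (hnu_pos 0).le
    | succ n => linarith [(hrates n).trans (min_le_right _ _)]
  calc ρ * gammaBD lam nu f x ≤ 0 :=
        mul_nonpos_of_nonpos_of_nonneg (nonpos_of_le_sub_succ hlam hlam_drop)
          (gammaBD_nonneg (hlam x) (hnu x) f)
    _ ≤ _ := sub_nonneg.2 (gammaBD_sqrt_gammaBD_le_gamma2BD hlam hnu hlam_anti hnu_mono f x)
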